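/- Let w ∈ Δ be a non-unstable equilibrium, i.e. ∂L/∂v_i(w) = 0 for every i with w_i > 0 and ∂L/∂v_i(w) ≤ 0 for every i with w_i = 0, and let f(v) = −1 + (1/N) Σ_{{i,j}∈E} (w_i + w_j)/(v_i + v_j). If v ∈ Δ satisfies f(v) = 0 (i.e. v is also a global minimum of f on Δ), then v_i + v_j = w_i + w_j for every edge {i,j} ∈ E. -/

import Mathlib

open Finset

/-- `v_i + v_j` as a function of the unordered pair `{i,j}`. -/
noncomputable def pairSum {m : ℕ} (v : Fin m → ℝ) : Sym2 (Fin m) → ℝ :=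
  Sym2.lift ⟨fun i j => v i + v j, fun i j => add_comm (v i) (v j)⟩

/-- The domain `Δ`. -/
def urnDomain {m : ℕ} (G : SimpleGraph (Fin m)) (c : ℝ) : Set (Fin m → ℝ) :=
  {v | (∀ i, 0 ≤ v i) ∧ (∑ i, v i) = 1 ∧ ∀ i j, G.Adj i j → c ≤ v i + v j}

/-- `∂L/∂v_i (v) = -1 + (1/N) Σ_{j ∼ i} 1/(v_i + v_j)`. -/
noncomputable def dLyap {m : ℕ} (G : SimpleGraph (Fin m)) [DecidableRel G.Adj] (N : ℕ)
    (i : Fin m) (v : Fin m → ℝ) : ℝ :=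
  -1 + (1 / (N : ℝ)) * ∑ j ∈ G.neighborFinset i, 1 / (v i + v j)

/-!
Write `a_e = w_i + w_j` and `b_e = v_i + v_j` for an edge `e = {i,j}`. Since `w` is a
non-unstable equilibrium, `∂L/∂v_i(w) ≤ 0` at every vertex, i.e. `Σ_{j ∼ i} 1/a_{ij} ≤ N`.
Splitting each `b_e` into its two endpoints gives
`Σ_e b_e/a_e = Σ_i v_i Σ_{j ∼ i} 1/a_{ij} ≤ N Σ_i v_i = N`, while `f(v) = 0` says
`Σ_e a_e/b_e = N`. Hence `Σ_e (a_e/b_e + b_e/a_e) ≤ 2N`, and as every term is at least `2`,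
with equality only when `a_e = b_e`, all pair sums agree.
-/

theorem div_add_div_sub_two {a b : ℝ} (ha : a ≠ 0) (hb : b ≠ 0) :
    a / b + b / a - 2 = (a - b) ^ 2 / (a * b) := by
  field_simp
  ring

theorem two_le_div_add_div {a b : ℝ} (ha : 0 < a) (hb : 0 < b) : 2 ≤ a / b + b / a := by
  have : 0 ≤ (a - b) ^ 2 / (a * b) := by positivity
  linarith [div_add_div_sub_two ha.ne' hb.ne']

theorem div_add_div_eq_two_iff {a b : ℝ} (ha : 0 < a) (hb : 0 < b) :
    a / b + b / a = 2 ↔ a = b := by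
  rw [← sub_eq_zero, div_add_div_sub_two ha.ne' hb.ne', div_eq_zero_iff,
    or_iff_left (mul_pos ha hb).ne', sq_eq_zero_iff, sub_eq_zero]

theorem Finset.eq_of_sum_div_add_sum_div_le {ι : Type*} {s : Finset ι} {a b : ι → ℝ}
    (ha : ∀ i ∈ s, 0 < a i) (hb : ∀ i ∈ s, 0 < b i)
    (h : ∑ i ∈ s, a i / b i + ∑ i ∈ s, b i / a i ≤ 2 * #s) :
    ∀ i ∈ s, a i = b i := by
  have hle : ∀ i ∈ s, 2 ≤ a i / b i + b i / a i := fun i hi =>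
    two_le_div_add_div (ha i hi) (hb i hi)
  have hsum : ∑ _i ∈ s, (2 : ℝ) = ∑ i ∈ s, (a i / b i + b i / a i) := by
    refine le_antisymm (sum_le_sum hle) ?_
    rw [sum_add_distrib, sum_const, nsmul_eq_mul, mul_comm]
    exact h
  intro i hi
  exact (div_add_div_eq_two_iff (ha i hi) (hb i hi)).mp
    ((sum_eq_sum_iff_of_le hle).mp hsum i hi).symm

namespace SimpleGraph

variable {V M : Type*} [Fintype V] (G : SimpleGraph V) [DecidableRel G.Adj] [AddCommMonoid M]

theorem sum_darts_edge (F : Sym2 V → M) :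
    ∑ d : G.Dart, F d.edge = 2 • ∑ e ∈ G.edgeFinset, F e := by
  classical
  rw [← sum_fiberwise_of_maps_to (g := Dart.edge) (t := G.edgeFinset)
    fun d _ => G.mem_edgeFinset.mpr d.edge_mem, smul_sum]
  refine sum_congr rfl fun e he => ?_
  rw [sum_congr rfl fun d hd => congrArg F (mem_filter.mp hd).2, sum_const,
    G.dart_edge_fiber_card e (G.mem_edgeFinset.mp he)]

theorem sum_darts_eq_sum_neighborFinset (g : V → V → M) :
    ∑ d : G.Dart, g d.fst d.snd = ∑ i, ∑ j ∈ G.neighborFinset i, g i j := by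
  rw [sum_sigma']
  refine sum_bij' (fun d _ => ⟨d.fst, d.snd⟩) (fun p hp => ⟨(p.1, p.2), by simpa using hp⟩)
    ?_ ?_ ?_ ?_ ?_ <;> simp

end SimpleGraph

open SimpleGraph

section UrnDomain

variable {m : ℕ} (G : SimpleGraph (Fin m)) [DecidableRel G.Adj]

theorem sum_edgeFinset_pairSum_div (v w : Fin m → ℝ) :
    ∑ e ∈ G.edgeFinset, pairSum v e / pairSum w e =
      ∑ i, v i * ∑ j ∈ G.neighborFinset i, 1 / (w i + w j) := by
  have hsymm : ∑ d : G.Dart, v d.snd / (w d.fst + w d.snd) =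
      ∑ d : G.Dart, v d.fst / (w d.fst + w d.snd) := by
    refine Eq.trans ?_ <| Equiv.sum_comp (Dart.symm_involutive.toPerm _)
      fun d : G.Dart => v d.fst / (w d.fst + w d.snd)
    exact sum_congr rfl fun d _ => by simp [Dart.symm, add_comm]
  have h2 : (2 : ℝ) * ∑ e ∈ G.edgeFinset, pairSum v e / pairSum w e =
      2 * ∑ i, v i * ∑ j ∈ G.neighborFinset i, 1 / (w i + w j) :=
    calc (2 : ℝ) * ∑ e ∈ G.edgeFinset, pairSum v e / pairSum w e
        = ∑ d : G.Dart, pairSum v d.edge / pairSum w d.edge := by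
          rw [sum_darts_edge G fun e => pairSum v e / pairSum w e, nsmul_eq_mul, Nat.cast_ofNat]
      _ = ∑ d : G.Dart, v d.fst / (w d.fst + w d.snd) +
            ∑ d : G.Dart, v d.snd / (w d.fst + w d.snd) := by
          rw [← sum_add_distrib]
          exact sum_congr rfl fun d _ => add_div _ _ _
      _ = 2 * ∑ d : G.Dart, v d.fst * (1 / (w d.fst + w d.snd)) := by
          simp_rw [hsymm, mul_one_div]
          ring
      _ = 2 * ∑ i, v i * ∑ j ∈ G.neighborFinset i, 1 / (w i + w j) := by
          rw [sum_darts_eq_sum_neighborFinset G fun i j => v i * (1 / (w i + w j))]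
          simp_rw [mul_sum]
  exact mul_left_cancel₀ two_ne_zero h2

variable {G}

theorem pairSum_pos_of_mem_urnDomain {c : ℝ} (hc : 0 < c) {v : Fin m → ℝ}
    (hv : v ∈ urnDomain G c) {e : Sym2 (Fin m)} (he : e ∈ G.edgeFinset) : 0 < pairSum v e := by
  induction e with
  | _ i j => exact hc.trans_le (hv.2.2 i j (G.mem_edgeFinset.mp he))

theorem sum_one_div_add_le_of_dLyap_nonpos {N : ℕ} (hN : 0 < N) {i : Fin m} {w : Fin m → ℝ}
    (h : dLyap G N i w ≤ 0) : ∑ j ∈ G.neighborFinset i, 1 / (w i + w j) ≤ N := by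
  have hN' : (0 : ℝ) < N := Nat.cast_pos.mpr hN
  have h' : (N : ℝ)⁻¹ * ∑ j ∈ G.neighborFinset i, 1 / (w i + w j) ≤ 1 := by
    rw [dLyap, one_div] at h
    linarith
  rwa [inv_mul_le_iff₀ hN', mul_one] at h'

theorem sum_edgeFinset_pairSum_div_le {v w : Fin m → ℝ} {K : ℝ}
    (hv0 : ∀ i, 0 ≤ v i) (hv1 : ∑ i, v i = 1)
    (hw : ∀ i, ∑ j ∈ G.neighborFinset i, 1 / (w i + w j) ≤ K) :
    ∑ e ∈ G.edgeFinset, pairSum v e / pairSum w e ≤ K :=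
  calc ∑ e ∈ G.edgeFinset, pairSum v e / pairSum w e
      = ∑ i, v i * ∑ j ∈ G.neighborFinset i, 1 / (w i + w j) := sum_edgeFinset_pairSum_div G v w
    _ ≤ ∑ i, v i * K := sum_le_sum fun i _ => mul_le_mul_of_nonneg_left (hw i) (hv0 i)
    _ = K := by rw [← sum_mul, hv1, one_mul]

end UrnDomain

theorem global_min_pair_sums_agree_general
    {m : ℕ} (G : SimpleGraph (Fin m)) [DecidableRel G.Adj]
    (N : ℕ) (hN : N = G.edgeFinset.card)
    (c : ℝ) (hc0 : 0 < c)
    (w : Fin m → ℝ) (hwΔ : w ∈ urnDomain G c)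
    (hw1 : ∀ i, 0 < w i → dLyap G N i w = 0)
    (hw2 : ∀ i, w i = 0 → dLyap G N i w ≤ 0)
    (f : (Fin m → ℝ) → ℝ)
    (hf : ∀ v, f v = -1 + (1 / (N : ℝ)) * ∑ e ∈ G.edgeFinset, pairSum w e / pairSum v e)
    (v : Fin m → ℝ) (hvΔ : v ∈ urnDomain G c) (hfv : f v = 0) :
    ∀ i j, G.Adj i j → v i + v j = w i + w j := by
  intro i j hij
  have hij' : s(i, j) ∈ G.edgeFinset := G.mem_edgeFinset.mpr hij
  have hNpos : 0 < N := hN ▸ card_pos.mpr ⟨_, hij'⟩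
  have hwv : ∑ e ∈ G.edgeFinset, pairSum w e / pairSum v e = N := by
    rw [hf] at hfv
    field_simp at hfv
    linarith
  have hvw : ∑ e ∈ G.edgeFinset, pairSum v e / pairSum w e ≤ N :=
    sum_edgeFinset_pairSum_div_le hvΔ.1 hvΔ.2.1 fun k =>
      sum_one_div_add_le_of_dLyap_nonpos hNpos <|
        (hwΔ.1 k).eq_or_lt.elim (fun h => hw2 k h.symm) fun h => (hw1 k h).le
  exact eq_of_sum_div_add_sum_div_le (fun _ he => pairSum_pos_of_mem_urnDomain hc0 hvΔ he)
    (fun _ he => pairSum_pos_of_mem_urnDomain hc0 hwΔ he) (by rw [← hN]; linarith) _ hij'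

/-- If `w ∈ Δ` is a non-unstable equilibrium,
`f(v) = -1 + (1/N) Σ_{{i,j} ∈ E} (w_i + w_j)/(v_i + v_j)`, and `v ∈ Δ` satisfies `f(v) = 0`
(i.e. `v` is also a global minimum of `f` on `Δ`), then `v_i + v_j = w_i + w_j` for every edge
`{i,j} ∈ E`. -/
theorem global_min_pair_sums_agree
    {m : ℕ} (hm : 2 ≤ m) (G : SimpleGraph (Fin m)) [DecidableRel G.Adj]
    (hconn : G.Connected)
    (N : ℕ) (hN : N = G.edgeFinset.card)
    (c : ℝ) (hc0 : 0 < c) (hc1 : c < 1 / (N : ℝ))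
    (w : Fin m → ℝ) (hwΔ : w ∈ urnDomain G c)
    (hw1 : ∀ i, 0 < w i → dLyap G N i w = 0)
    (hw2 : ∀ i, w i = 0 → dLyap G N i w ≤ 0)
    (f : (Fin m → ℝ) → ℝ)
    (hf : ∀ v, f v = -1 + (1 / (N : ℝ)) * ∑ e ∈ G.edgeFinset, pairSum w e / pairSum v e)
    (v : Fin m → ℝ) (hvΔ : v ∈ urnDomain G c) (hfv : f v = 0) :
    ∀ i j, G.Adj i j → v i + v j = w i + w j :=
  global_min_pair_sums_agree_general G N hN c hc0 w hwΔ hw1 hw2 f hf v hvΔ hfv
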